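/- Let (Ω, F, P) be a probability space, ℓ : [0, ∞) → [0, ∞) a loss function as specified, I := (ℓ')⁻¹, V : Ω → (0, ∞) measurable, and G : Ω → [0, ∞) measurable with P(G > 0) > 0, E[ℓ(G)] < ∞ and 0 < E[V G] < ∞. Fix y with 0 < y < E[V G]. For c > 0 define φ̂(c) := 1_{G>0}·(1 − min(I(cV)/G, 1)) and k(c) := E[V G φ̂(c)], and let ĉ > 0 be the unique positive solution of k(ĉ) = y (which exists). Then φ̂(ĉ) is optimal for the constrained expected-shortfall problem: E[V G φ̂(ĉ)] = y, and for every measurable φ : Ω → [0, 1] with E[V G φ] ≤ y one has E[ℓ((1 − φ̂(ĉ))G)] ≤ E[ℓ((1 − φ)G)]. -/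

import Mathlib

/-!
For a multiplier `c > 0`, convexity of `ℓ` shows that `x ↦ ℓ x + c V (G - x)` is minimised on
`[0, G]` at `min (I (c V)) G = (1 - φ̂(c)) G`. Integrating this pointwise Lagrangian inequality,
any `φ` with `E[V G φ] ≤ y = k(ĉ)` has `E[ℓ((1 - φ) G)] ≥ E[ℓ((1 - φ̂(ĉ)) G)]`.
The multiplier `ĉ` exists by the intermediate value theorem: by dominated convergence `k` is
continuous on `(0, ∞)` with `k(0+) = E[V G]` and `k(∞) = 0`. It is unique because equal budgets
at `c₁ < c₂` force `k(c₁) = 0`.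
-/

open MeasureTheory Set Filter Topology

lemma ContinuousOn.measurable_comp {α β γ : Type*} [MeasurableSpace α] [TopologicalSpace β]
    [MeasurableSpace β] [OpensMeasurableSpace β] [TopologicalSpace γ] [MeasurableSpace γ]
    [BorelSpace γ] {f : β → γ} {s : Set β} {g : α → β} (hf : ContinuousOn f s)
    (hs : MeasurableSet s) (hg : Measurable g) (hgs : ∀ a, g a ∈ s) :
    Measurable fun a => f (g a) := by
  refine measurable_of_isOpen fun U hU => ?_
  obtain ⟨u, hu, hfu⟩ := continuousOn_iff'.1 hf U hU
  have : (fun a => f (g a)) ⁻¹' U = g ⁻¹' (u ∩ s) := by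
    ext a
    simpa [hgs a] using Set.ext_iff.1 hfu (g a)
  exact this ▸ hg (hu.measurableSet.inter hs)

section Convex

variable {f f' : ℝ → ℝ} {s : Set ℝ}

lemma ConvexOn.add_mul_sub_le_of_hasDerivWithinAt (hf : ConvexOn ℝ s f) {a b d : ℝ}
    (ha : a ∈ s) (hb : b ∈ s) (hd : HasDerivWithinAt f d s a) : f a + d * (b - a) ≤ f b := by
  rcases lt_trichotomy a b with hab | rfl | hba
  · have := hf.le_slope_of_hasDerivWithinAt ha hb hab hd
    rw [slope_def_field, le_div_iff₀ (sub_pos.2 hab)] at this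
    linarith
  · simp
  · have := hf.slope_le_of_hasDerivWithinAt hb ha hba hd
    rw [slope_def_field, div_le_iff₀ (sub_pos.2 hba)] at this
    linarith

lemma ConvexOn.monotoneOn_of_hasDerivWithinAt (hf : ConvexOn ℝ s f)
    (hf' : ∀ x ∈ s, HasDerivWithinAt f (f' x) s x) : MonotoneOn f' s := by
  intro x hx y hy hxy
  rcases eq_or_lt_of_le hxy with rfl | hxy
  · rfl
  exact (hf.le_slope_of_hasDerivWithinAt hx hy hxy (hf' x hx)).trans
    (hf.slope_le_of_hasDerivWithinAt hx hy hxy (hf' y hy))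

lemma ConvexOn.pos_of_hasDerivWithinAt_of_strictMonoOn (hf : ConvexOn ℝ s f)
    (hmono : StrictMonoOn f s) {a x d : ℝ} (ha : a ∈ s) (hx : x ∈ s) (hax : a < x)
    (hd : HasDerivWithinAt f d s x) : 0 < d :=
  ((slope_pos_iff hax).2 (hmono ha hx hax)).trans_le
    (hf.slope_le_of_hasDerivWithinAt ha hx hax hd)

lemma ConvexOn.isMinOn_min_of_hasDerivWithinAt (hf : ConvexOn ℝ (Ici 0) f)
    (hf' : ∀ x ∈ Ici (0 : ℝ), HasDerivWithinAt f (f' x) (Ici 0) x) {p t g : ℝ}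
    (hp : 0 ≤ p) (hfp : f' p = t) (hg : 0 ≤ g) :
    IsMinOn (fun x => f x - t * x) (Icc 0 g) (min p g) := by
  intro x hx
  have hmin : min p g ∈ Ici (0 : ℝ) := le_min hp hg
  have htangent := hf.add_mul_sub_le_of_hasDerivWithinAt hmin hx.1 (hf' _ hmin)
  suffices t * (x - min p g) ≤ f' (min p g) * (x - min p g) by
    simp only [mem_ofPred_eq]; linarith
  rcases le_total p g with hpg | hgp
  · rw [min_eq_left hpg, hfp]
  · rw [min_eq_right hgp]
    exact mul_le_mul_of_nonpos_right (hfp ▸ hf.monotoneOn_of_hasDerivWithinAt hf' hg hp hgp)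
      (sub_nonpos.2 hx.2)

end Convex

lemma MonotoneOn.strictMonoOn_of_rightInvOn {α β : Type*} [LinearOrder α] [LinearOrder β]
    {g : α → β} {I : β → α} {s : Set α} {t : Set β} (hg : MonotoneOn g s) (hI : MapsTo I t s)
    (hinv : RightInvOn I g t) : StrictMonoOn I t := by
  intro x hx y hy hxy
  by_contra! hyx
  have := hg (hI hy) (hI hx) hyx
  rw [hinv hx, hinv hy] at this
  exact hxy.not_ge this

section MonotoneBijection

variable {f : ℝ → ℝ} {a b : ℝ}

lemma MonotoneOn.continuousOn_of_image_Ioi_eq (hf : MonotoneOn f (Ioi a))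
    (himg : f '' Ioi a = Ioi b) : ContinuousOn f (Ioi a) := by
  intro x hx
  have hfx : f x ∈ Ioi b := himg ▸ mem_image_of_mem f hx
  exact (continuousAt_of_monotoneOn_of_image_mem_nhds hf (Ioi_mem_nhds hx)
    (himg ▸ Ioi_mem_nhds hfx)).continuousWithinAt

lemma MonotoneOn.tendsto_nhdsGT_of_image_Ioi_eq (hf : MonotoneOn f (Ioi a))
    (himg : f '' Ioi a = Ioi b) : Tendsto f (𝓝[>] a) (𝓝 b) := by
  have := hf.tendsto_nhdsGT (himg ▸ bddBelow_Ioi)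
  rwa [himg, csInf_Ioi] at this

lemma MonotoneOn.tendsto_atTop_of_image_Ioi_eq (hf : MonotoneOn f (Ioi a))
    (himg : f '' Ioi a = Ioi b) : Tendsto f atTop atTop := by
  refine tendsto_atTop_atTop.2 fun c => ?_
  obtain ⟨x, hx, hfx⟩ : max c (b + 1) ∈ f '' Ioi a := himg ▸ lt_max_of_lt_right (lt_add_one b)
  refine ⟨x, fun y hxy => ?_⟩
  have := hf hx (lt_of_lt_of_le hx hxy) hxy
  rw [hfx] at this
  exact (le_max_left _ _).trans this

end MonotoneBijection

lemma one_sub_ite_mul_eq_min {a g : ℝ} (ha : 0 ≤ a) (hg : 0 ≤ g) :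
    (1 - if 0 < g then 1 - min (a / g) 1 else 0) * g = min a g := by
  split_ifs with h
  · rw [sub_sub_cancel, min_mul_of_nonneg _ _ hg, div_mul_cancel₀ _ h.ne', one_mul]
  · rw [le_antisymm (not_lt.1 h) hg, mul_zero, min_eq_right ha]

section Shortfall

variable {Ω : Type*} {I : ℝ → ℝ} {V G : Ω → ℝ} {c : ℝ}

/-- `(1 - φ̂(c)) G`, the part of `G` left unhedged by `φ̂(c)`. -/
def optimalShortfall (I : ℝ → ℝ) (V G : Ω → ℝ) (c : ℝ) (ω : Ω) : ℝ :=
  min (I (c * V ω)) (G ω)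

lemma optimalShortfall_mem_Icc (hIpos : MapsTo I (Ioi 0) (Ioi 0)) (hVpos : ∀ ω, 0 < V ω)
    (hG : ∀ ω, 0 ≤ G ω) (hc : 0 < c) (ω : Ω) : optimalShortfall I V G c ω ∈ Icc 0 (G ω) :=
  ⟨le_min (hIpos (mul_pos hc (hVpos ω))).le (hG ω), min_le_right _ _⟩

lemma norm_mul_sub_optimalShortfall_le (hIpos : MapsTo I (Ioi 0) (Ioi 0))
    (hVpos : ∀ ω, 0 < V ω) (hG : ∀ ω, 0 ≤ G ω) (hc : 0 < c) (ω : Ω) :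
    ‖V ω * (G ω - optimalShortfall I V G c ω)‖ ≤ V ω * G ω := by
  obtain ⟨h0, hle⟩ := optimalShortfall_mem_Icc hIpos hVpos hG hc ω
  rw [Real.norm_of_nonneg (mul_nonneg (hVpos ω).le (sub_nonneg.2 hle))]
  exact mul_le_mul_of_nonneg_left (by linarith) (hVpos ω).le

variable [MeasurableSpace Ω]

/-- The cost `k(c) = E[V G φ̂(c)]` of the hedge `φ̂(c)`. -/
noncomputable def budget (P : Measure Ω) (I : ℝ → ℝ) (V G : Ω → ℝ) (c : ℝ) : ℝ :=
  ∫ ω, V ω * (G ω - optimalShortfall I V G c ω) ∂P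

variable {P : Measure Ω}

lemma measurable_optimalShortfall (hI : ContinuousOn I (Ioi 0)) (hV : Measurable V)
    (hVpos : ∀ ω, 0 < V ω) (hG : Measurable G) (hc : 0 < c) :
    Measurable (optimalShortfall I V G c) :=
  (hI.measurable_comp measurableSet_Ioi (hV.const_mul c) fun ω => mul_pos hc (hVpos ω)).min hG

lemma integrable_mul_sub_optimalShortfall (hI : ContinuousOn I (Ioi 0))
    (hIpos : MapsTo I (Ioi 0) (Ioi 0)) (hV : Measurable V) (hVpos : ∀ ω, 0 < V ω)
    (hG : Measurable G) (hGnn : ∀ ω, 0 ≤ G ω) (hVG : Integrable (fun ω => V ω * G ω) P)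
    (hc : 0 < c) : Integrable (fun ω => V ω * (G ω - optimalShortfall I V G c ω)) P :=
  hVG.mono' (hV.mul (hG.sub (measurable_optimalShortfall hI hV hVpos hG hc))).aestronglyMeasurable
    (ae_of_all _ (norm_mul_sub_optimalShortfall_le hIpos hVpos hGnn hc))

lemma tendsto_budget {l : Filter ℝ} [l.IsCountablyGenerated] {S : Ω → ℝ}
    (hI : ContinuousOn I (Ioi 0)) (hIpos : MapsTo I (Ioi 0) (Ioi 0)) (hV : Measurable V)
    (hVpos : ∀ ω, 0 < V ω) (hG : Measurable G) (hGnn : ∀ ω, 0 ≤ G ω)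
    (hVG : Integrable (fun ω => V ω * G ω) P) (hl : ∀ᶠ c in l, 0 < c)
    (hlim : ∀ ω, Tendsto (fun c => optimalShortfall I V G c ω) l (𝓝 (S ω))) :
    Tendsto (budget P I V G) l (𝓝 (∫ ω, V ω * (G ω - S ω) ∂P)) :=
  tendsto_integral_filter_of_dominated_convergence _
    (hl.mono fun _ hc =>
      (integrable_mul_sub_optimalShortfall hI hIpos hV hVpos hG hGnn hVG hc).aestronglyMeasurable)
    (hl.mono fun _ hc => ae_of_all _ (norm_mul_sub_optimalShortfall_le hIpos hVpos hGnn hc)) hVG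
    (ae_of_all _ fun ω => ((hlim ω).const_sub (G ω)).const_mul (V ω))

lemma continuousOn_budget (hI : ContinuousOn I (Ioi 0)) (hIpos : MapsTo I (Ioi 0) (Ioi 0))
    (hV : Measurable V) (hVpos : ∀ ω, 0 < V ω) (hG : Measurable G) (hGnn : ∀ ω, 0 ≤ G ω)
    (hVG : Integrable (fun ω => V ω * G ω) P) : ContinuousOn (budget P I V G) (Ioi 0) :=
  fun _ hc => ContinuousAt.continuousWithinAt <|
    tendsto_budget hI hIpos hV hVpos hG hGnn hVG (eventually_gt_nhds hc) fun ω =>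
      (ContinuousAt.comp (f := (· * V ω)) (hI.continuousAt (Ioi_mem_nhds (mul_pos hc (hVpos ω))))
        (continuous_mul_const (V ω)).continuousAt).min continuousAt_const

lemma tendsto_budget_nhdsGT_zero (hI : ContinuousOn I (Ioi 0))
    (hIpos : MapsTo I (Ioi 0) (Ioi 0)) (hI0 : Tendsto I (𝓝[>] 0) (𝓝 0)) (hV : Measurable V)
    (hVpos : ∀ ω, 0 < V ω) (hG : Measurable G) (hGnn : ∀ ω, 0 ≤ G ω)
    (hVG : Integrable (fun ω => V ω * G ω) P) :
    Tendsto (budget P I V G) (𝓝[>] 0) (𝓝 (∫ ω, V ω * G ω ∂P)) := by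
  have hlim (ω : Ω) : Tendsto (fun c => optimalShortfall I V G c ω) (𝓝[>] 0) (𝓝 0) := by
    have hmul : Tendsto (· * V ω) (𝓝[>] 0) (𝓝[>] 0) := by
      simpa using TendstoNhdsWithinIoi.mul_const (c := 0) (hVpos ω) tendsto_id
    simpa [optimalShortfall, min_eq_left (hGnn ω)] using
      (hI0.comp hmul).min (tendsto_const_nhds (x := G ω))
  simpa using tendsto_budget (l := 𝓝[>] 0) hI hIpos hV hVpos hG hGnn hVG self_mem_nhdsWithin hlim

lemma tendsto_budget_atTop (hI : ContinuousOn I (Ioi 0)) (hIpos : MapsTo I (Ioi 0) (Ioi 0))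
    (hItop : Tendsto I atTop atTop) (hV : Measurable V) (hVpos : ∀ ω, 0 < V ω)
    (hG : Measurable G) (hGnn : ∀ ω, 0 ≤ G ω) (hVG : Integrable (fun ω => V ω * G ω) P) :
    Tendsto (budget P I V G) atTop (𝓝 0) := by
  have hlim (ω : Ω) : Tendsto (fun c => optimalShortfall I V G c ω) atTop (𝓝 (G ω)) :=
    tendsto_const_nhds.congr' <|
      ((hItop.comp (tendsto_id.atTop_mul_const (hVpos ω))).eventually_ge_atTop (G ω)).mono
        fun _ hc => (min_eq_right hc).symm
  simpa using tendsto_budget hI hIpos hV hVpos hG hGnn hVG (eventually_gt_atTop 0) hlim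

lemma exists_budget_eq (hImono : MonotoneOn I (Ioi 0)) (himg : I '' Ioi 0 = Ioi 0)
    (hV : Measurable V) (hVpos : ∀ ω, 0 < V ω) (hG : Measurable G) (hGnn : ∀ ω, 0 ≤ G ω)
    (hVG : Integrable (fun ω => V ω * G ω) P) {y : ℝ} (hy : 0 < y)
    (hy' : y < ∫ ω, V ω * G ω ∂P) : ∃ c, 0 < c ∧ budget P I V G c = y := by
  have hI := hImono.continuousOn_of_image_Ioi_eq himg
  have hIpos : MapsTo I (Ioi 0) (Ioi 0) := fun _ ht => himg ▸ mem_image_of_mem I ht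
  obtain ⟨a, hay, ha⟩ := (((tendsto_budget_nhdsGT_zero hI hIpos
    (hImono.tendsto_nhdsGT_of_image_Ioi_eq himg) hV hVpos hG hGnn hVG).eventually
      (eventually_gt_nhds hy')).and self_mem_nhdsWithin).exists
  obtain ⟨b, hby, hab⟩ := (((tendsto_budget_atTop hI hIpos
    (hImono.tendsto_atTop_of_image_Ioi_eq himg) hV hVpos hG hGnn hVG).eventually
      (eventually_lt_nhds hy)).and (eventually_ge_atTop a)).exists
  obtain ⟨c, hc, hcy⟩ := intermediate_value_Icc' hab
    ((continuousOn_budget hI hIpos hV hVpos hG hGnn hVG).mono fun x hx => ha.trans_le hx.1)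
    ⟨hby.le, hay.le⟩
  exact ⟨c, ha.trans_le hc.1, hcy⟩

/-- On `{G > I(c₁ V)}` the shortfall strictly grows from `c₁` to `c₂`, so equal budgets force
`G ≤ I(c₁ V)` almost everywhere, i.e. nothing is hedged at `c₁`. -/
lemma budget_eq_zero_of_budget_eq_of_lt (hImono : StrictMonoOn I (Ioi 0))
    (hI : ContinuousOn I (Ioi 0)) (hIpos : MapsTo I (Ioi 0) (Ioi 0)) (hV : Measurable V)
    (hVpos : ∀ ω, 0 < V ω) (hG : Measurable G) (hGnn : ∀ ω, 0 ≤ G ω)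
    (hVG : Integrable (fun ω => V ω * G ω) P) {c₁ c₂ : ℝ} (hc₁ : 0 < c₁) (hlt : c₁ < c₂)
    (heq : budget P I V G c₁ = budget P I V G c₂) : budget P I V G c₁ = 0 := by
  set S₁ := optimalShortfall I V G c₁
  set S₂ := optimalShortfall I V G c₂
  have hc₂ := hc₁.trans hlt
  have hI₁₂ (ω : Ω) : I (c₁ * V ω) < I (c₂ * V ω) :=
    hImono (mul_pos hc₁ (hVpos ω)) (mul_pos hc₂ (hVpos ω)) (mul_lt_mul_of_pos_right hlt (hVpos ω))
  have hint₁ := integrable_mul_sub_optimalShortfall hI hIpos hV hVpos hG hGnn hVG hc₁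
  have hint₂ := integrable_mul_sub_optimalShortfall hI hIpos hV hVpos hG hGnn hVG hc₂
  have hsub : (fun ω => V ω * (S₂ ω - S₁ ω))
      = fun ω => V ω * (G ω - S₁ ω) - V ω * (G ω - S₂ ω) := by
    ext ω; ring
  have hint : Integrable (fun ω => V ω * (S₂ ω - S₁ ω)) P := hsub ▸ hint₁.sub hint₂
  have hzero : ∫ ω, V ω * (S₂ ω - S₁ ω) ∂P = 0 := by
    rw [hsub, integral_sub hint₁ hint₂, ← budget, ← budget, heq, sub_self]
  have hnonneg : 0 ≤ fun ω => V ω * (S₂ ω - S₁ ω) := fun ω =>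
    mul_nonneg (hVpos ω).le (sub_nonneg.2 (min_le_min_right _ (hI₁₂ ω).le))
  have hS : ∀ᵐ ω ∂P, V ω * (G ω - S₁ ω) = 0 := by
    filter_upwards [(integral_eq_zero_iff_of_nonneg hnonneg hint).1 hzero] with ω hω
    have hS₁₂ : min (I (c₁ * V ω)) (G ω) = min (I (c₂ * V ω)) (G ω) :=
      (sub_eq_zero.1 ((mul_eq_zero.1 hω).resolve_left (hVpos ω).ne')).symm
    have hS₁ : S₁ ω = G ω := by
      have := hI₁₂ ω
      simp only [S₁, optimalShortfall]
      grind
    rw [hS₁, sub_self, mul_zero]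
  rw [budget, integral_congr_ae hS, integral_zero]

lemma eq_of_budget_eq (hImono : StrictMonoOn I (Ioi 0))
    (hI : ContinuousOn I (Ioi 0)) (hIpos : MapsTo I (Ioi 0) (Ioi 0)) (hV : Measurable V)
    (hVpos : ∀ ω, 0 < V ω) (hG : Measurable G) (hGnn : ∀ ω, 0 ≤ G ω)
    (hVG : Integrable (fun ω => V ω * G ω) P) {c₁ c₂ : ℝ} (hc₁ : 0 < c₁) (hc₂ : 0 < c₂)
    (heq : budget P I V G c₁ = budget P I V G c₂) (hne : budget P I V G c₁ ≠ 0) : c₁ = c₂ := by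
  rcases lt_trichotomy c₁ c₂ with h | h | h
  · exact absurd
      (budget_eq_zero_of_budget_eq_of_lt hImono hI hIpos hV hVpos hG hGnn hVG hc₁ h heq) hne
  · exact h
  · exact absurd (budget_eq_zero_of_budget_eq_of_lt hImono hI hIpos hV hVpos hG hGnn hVG hc₂ h
      heq.symm) (heq ▸ hne)

lemma integrable_comp_of_mem_Icc [IsFiniteMeasure P] {ℓ : ℝ → ℝ} (hℓ : ContinuousOn ℓ (Ici 0))
    (hmono : MonotoneOn ℓ (Ici 0)) (hℓG : Integrable (fun ω => ℓ (G ω)) P) {X : Ω → ℝ}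
    (hX : Measurable X) (hXG : ∀ ω, X ω ∈ Icc 0 (G ω)) : Integrable (fun ω => ℓ (X ω)) P :=
  integrable_of_le_of_le
    (hℓ.measurable_comp measurableSet_Ici hX fun ω => (hXG ω).1).aestronglyMeasurable
    (ae_of_all _ fun ω => hmono self_mem_Ici (hXG ω).1 (hXG ω).1)
    (ae_of_all _ fun ω => hmono (hXG ω).1 ((hXG ω).1.trans (hXG ω).2) (hXG ω).2)
    (integrable_const (ℓ 0)) hℓG

lemma integral_loss_optimalShortfall_le [IsFiniteMeasure P] {ℓ ℓd : ℝ → ℝ}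
    (hderiv : ∀ x ∈ Ici (0:ℝ), HasDerivWithinAt ℓ (ℓd x) (Ici 0) x)
    (hconv : ConvexOn ℝ (Ici 0) ℓ) (hmono : MonotoneOn ℓ (Ici 0))
    (hI : ∀ t ∈ Ioi (0:ℝ), I t ∈ Ioi (0:ℝ) ∧ ℓd (I t) = t) (hIc : ContinuousOn I (Ioi 0))
    (hV : Measurable V) (hVpos : ∀ ω, 0 < V ω) (hG : Measurable G) (hGnn : ∀ ω, 0 ≤ G ω)
    (hℓG : Integrable (fun ω => ℓ (G ω)) P) (hVG : Integrable (fun ω => V ω * G ω) P)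
    (hc : 0 < c) {φ : Ω → ℝ} (hφ : Measurable φ) (hφ01 : ∀ ω, φ ω ∈ Icc (0:ℝ) 1)
    (hbud : ∫ ω, V ω * G ω * φ ω ∂P ≤ budget P I V G c) :
    ∫ ω, ℓ (optimalShortfall I V G c ω) ∂P ≤ ∫ ω, ℓ ((1 - φ ω) * G ω) ∂P := by
  have hIpos : MapsTo I (Ioi 0) (Ioi 0) := fun t ht => (hI t ht).1
  have hℓc : ContinuousOn ℓ (Ici 0) := fun x hx => (hderiv x hx).continuousWithinAt
  have hX (ω : Ω) : (1 - φ ω) * G ω ∈ Icc 0 (G ω) :=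
    ⟨mul_nonneg (sub_nonneg.2 (hφ01 ω).2) (hGnn ω),
      mul_le_of_le_one_left (hGnn ω) (sub_le_self _ (hφ01 ω).1)⟩
  have hSint := integrable_comp_of_mem_Icc hℓc hmono hℓG
    (measurable_optimalShortfall hIc hV hVpos hG hc) (optimalShortfall_mem_Icc hIpos hVpos hGnn hc)
  have hXint := integrable_comp_of_mem_Icc (X := fun ω => (1 - φ ω) * G ω) hℓc hmono hℓG
    ((measurable_const.sub hφ).mul hG) hX
  have hcost := integrable_mul_sub_optimalShortfall hIc hIpos hV hVpos hG hGnn hVG hc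
  have hφint : Integrable (fun ω => V ω * G ω * φ ω) P :=
    hVG.mono' ((hV.mul hG).mul hφ).aestronglyMeasurable (ae_of_all _ fun ω => by
      rw [Real.norm_of_nonneg (mul_nonneg (mul_nonneg (hVpos ω).le (hGnn ω)) (hφ01 ω).1)]
      exact mul_le_of_le_one_right (mul_nonneg (hVpos ω).le (hGnn ω)) (hφ01 ω).2)
  have hlagrange (ω : Ω) :
      ℓ (optimalShortfall I V G c ω) + c * (V ω * (G ω - optimalShortfall I V G c ω))
        ≤ ℓ ((1 - φ ω) * G ω) + c * (V ω * G ω * φ ω) := by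
    have hcV := mul_pos hc (hVpos ω)
    have := hconv.isMinOn_min_of_hasDerivWithinAt hderiv (hI _ hcV).1.le (hI _ hcV).2 (hGnn ω)
      (hX ω)
    simp only [mem_ofPred_eq] at this
    unfold optimalShortfall
    linear_combination this
  have hint : ∫ ω, (ℓ (optimalShortfall I V G c ω)
        + c * (V ω * (G ω - optimalShortfall I V G c ω))) ∂P
      ≤ ∫ ω, (ℓ ((1 - φ ω) * G ω) + c * (V ω * G ω * φ ω)) ∂P :=
    integral_mono (hSint.add (hcost.const_mul c)) (hXint.add (hφint.const_mul c)) hlagrange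
  rw [integral_add hSint (hcost.const_mul c), integral_add hXint (hφint.const_mul c),
    integral_const_mul, integral_const_mul, ← budget] at hint
  linarith [mul_le_mul_of_nonneg_left hbud hc.le]

end Shortfall

theorem stmt_12_general
    {Ω : Type*} [MeasurableSpace Ω] (P : Measure Ω) [IsProbabilityMeasure P]
    (ℓ ℓd I : ℝ → ℝ)
    (hderiv : ∀ x ∈ Ici (0:ℝ), HasDerivWithinAt ℓ (ℓd x) (Ici 0) x)
    (hsconv : StrictConvexOn ℝ (Ici 0) ℓ)
    (hincr : StrictMonoOn ℓ (Ici 0))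
    (hI : ∀ y ∈ Ioi (0:ℝ), I y ∈ Ioi (0:ℝ) ∧ ℓd (I y) = y)
    (hI' : ∀ x ∈ Ioi (0:ℝ), I (ℓd x) = x)
    (V G : Ω → ℝ) (hVmeas : Measurable V) (hGmeas : Measurable G)
    (hVpos : ∀ ω, 0 < V ω) (hGpos : ∀ ω, 0 ≤ G ω)
    (hℓG : Integrable (fun ω => ℓ (G ω)) P)
    (hVG : Integrable (fun ω => V ω * G ω) P)
    (y : ℝ) (hy : 0 < y) (hy' : y < ∫ ω, V ω * G ω ∂P)
    (φh : ℝ → Ω → ℝ)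
    (hφh : ∀ c ω, φh c ω = if 0 < G ω then 1 - min (I (c * V ω) / G ω) 1 else 0)
    (k : ℝ → ℝ)
    (hk : ∀ c, k c = ∫ ω, V ω * G ω * φh c ω ∂P) :
    (∃! c : ℝ, 0 < c ∧ k c = y) ∧
    ∀ c : ℝ, 0 < c → k c = y →
      (∫ ω, V ω * G ω * φh c ω ∂P) = y ∧
      ∀ φ : Ω → ℝ, Measurable φ → (∀ ω, φ ω ∈ Icc (0:ℝ) 1) →
        (∫ ω, V ω * G ω * φ ω ∂P) ≤ y →
        (∫ ω, ℓ ((1 - φh c ω) * G ω) ∂P) ≤ ∫ ω, ℓ ((1 - φ ω) * G ω) ∂P := by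
  have hconv := hsconv.convexOn
  have hIpos : MapsTo I (Ioi 0) (Ioi 0) := fun t ht => (hI t ht).1
  have hImono : StrictMonoOn I (Ioi 0) :=
    (hconv.monotoneOn_of_hasDerivWithinAt hderiv).strictMonoOn_of_rightInvOn
      (fun t ht => mem_Ici.2 (hIpos ht).le) fun t ht => (hI t ht).2
  have himg : I '' Ioi 0 = Ioi 0 := (mapsTo_iff_image_subset.1 hIpos).antisymm fun x hx =>
    have hx' : x ∈ Ici 0 := Ioi_subset_Ici_self hx
    ⟨ℓd x, hconv.pos_of_hasDerivWithinAt_of_strictMonoOn hincr self_mem_Ici hx' hx (hderiv x hx'),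
      hI' x hx⟩
  have hIc := hImono.monotoneOn.continuousOn_of_image_Ioi_eq himg
  have hshort (c : ℝ) (hc : 0 < c) (ω : Ω) : (1 - φh c ω) * G ω = optimalShortfall I V G c ω :=
    hφh c ω ▸ one_sub_ite_mul_eq_min (hIpos (mul_pos hc (hVpos ω))).le (hGpos ω)
  have hk' (c : ℝ) (hc : 0 < c) : k c = budget P I V G c := by
    refine (hk c).trans (integral_congr_ae (ae_of_all _ fun ω => ?_))
    simp only [← hshort c hc]
    ring
  obtain ⟨c₀, hc₀, hc₀y⟩ := exists_budget_eq hImono.monotoneOn himg hVmeas hVpos hGmeas hGpos hVG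
    hy hy'
  refine ⟨⟨c₀, ⟨hc₀, (hk' c₀ hc₀).trans hc₀y⟩, fun c ⟨hc, hcy⟩ => ?_⟩,
    fun c hc hcy => ⟨(hk c).symm.trans hcy, fun φ hφ hφ01 hbud => ?_⟩⟩
  · have hcy' : budget P I V G c = y := (hk' c hc).symm.trans hcy
    exact eq_of_budget_eq hImono hIc hIpos hVmeas hVpos hGmeas hGpos hVG hc hc₀
      (hcy'.trans hc₀y.symm) (hcy'.trans_ne hy.ne')
  · simp_rw [hshort c hc]
    exact integral_loss_optimalShortfall_le hderiv hconv hincr.monotoneOn hI hIc hVmeas hVpos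
      hGmeas hGpos hℓG hVG hc hφ hφ01 (hbud.trans ((hk' c hc).symm.trans hcy).ge)

/-- **Optimality of `φ̂(ĉ)` for the constrained expected-shortfall problem (static form).**
With `ℓ` a `C¹`, strictly convex, increasing loss function with `ℓ(0)=0`, `ℓ'(0⁺)=0`,
`ℓ'(∞)=∞`, `I = (ℓ')⁻¹`, `V > 0`, `G ≥ 0` with `P(G>0) > 0`, `E[ℓ(G)] < ∞`,
`0 < y < E[VG]`, `φ̂(c) = 1_{G>0}(1 − min(I(cV)/G, 1))` and `k(c) = E[VG φ̂(c)]`: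
there is a unique `ĉ > 0` with `k(ĉ) = y`, and for this `ĉ`, `φ̂(ĉ)` saturates the budget
(`E[VG φ̂(ĉ)] = y`) and minimizes `E[ℓ((1−φ)G)]` among all measurable `φ : Ω → [0,1]`
with `E[VGφ] ≤ y`. -/
theorem stmt_12
    {Ω : Type*} [MeasurableSpace Ω] (P : Measure Ω) [IsProbabilityMeasure P]
    (ℓ ℓd I : ℝ → ℝ)
    (hderiv : ∀ x ∈ Ici (0:ℝ), HasDerivWithinAt ℓ (ℓd x) (Ici 0) x)
    (hdcont : ContinuousOn ℓd (Ici 0))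
    (hsconv : StrictConvexOn ℝ (Ici 0) ℓ)
    (hincr : StrictMonoOn ℓ (Ici 0))
    (hzero : ℓ 0 = 0)
    (hd0 : Tendsto ℓd (nhdsWithin 0 (Ioi 0)) (nhds 0))
    (hdinf : Tendsto ℓd atTop atTop)
    (hI : ∀ y ∈ Ioi (0:ℝ), I y ∈ Ioi (0:ℝ) ∧ ℓd (I y) = y)
    (hI' : ∀ x ∈ Ioi (0:ℝ), I (ℓd x) = x)
    (V G : Ω → ℝ) (hVmeas : Measurable V) (hGmeas : Measurable G)
    (hVpos : ∀ ω, 0 < V ω) (hGpos : ∀ ω, 0 ≤ G ω)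
    (hGpos' : 0 < P {ω | 0 < G ω})
    (hℓG : Integrable (fun ω => ℓ (G ω)) P)
    (hVG : Integrable (fun ω => V ω * G ω) P)
    (hVGpos : 0 < ∫ ω, V ω * G ω ∂P)
    (y : ℝ) (hy : 0 < y) (hy' : y < ∫ ω, V ω * G ω ∂P)
    (φh : ℝ → Ω → ℝ)
    (hφh : ∀ c ω, φh c ω = if 0 < G ω then 1 - min (I (c * V ω) / G ω) 1 else 0)
    (k : ℝ → ℝ)
    (hk : ∀ c, k c = ∫ ω, V ω * G ω * φh c ω ∂P) :
    (∃! c : ℝ, 0 < c ∧ k c = y) ∧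
    ∀ c : ℝ, 0 < c → k c = y →
      (∫ ω, V ω * G ω * φh c ω ∂P) = y ∧
      ∀ φ : Ω → ℝ, Measurable φ → (∀ ω, φ ω ∈ Icc (0:ℝ) 1) →
        (∫ ω, V ω * G ω * φ ω ∂P) ≤ y →
        (∫ ω, ℓ ((1 - φh c ω) * G ω) ∂P) ≤ ∫ ω, ℓ ((1 - φ ω) * G ω) ∂P :=
  stmt_12_general P ℓ ℓd I hderiv hsconv hincr hI hI' V G hVmeas hGmeas hVpos hGpos hℓG hVG y hy hy'
    φh hφh k hk
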